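/- arXiv:2411.06728 — 2 statements merged into one kernel-verified Lean document; each statement's English description precedes it below -/
import Mathlib

section
/- Let n ≥ 1, ζ ≥ 1, and let g_μ(x) = ⟨w_μ, x⟩ + b_μ (μ = 1,…,ζ) be affine functionals on ℝⁿ with w_μ ≠ 0. Let R_1,…,R_ζ ⊆ [0,1]ⁿ be nonempty sets such that: (i) for every ν = 2,…,ζ and every j < ν, R_j ⊆ {x : g_ν(x) ≤ 0}; (ii) for every i and every μ ≤ i, R_i ⊆ {x : g_μ(x) ≥ 0}. Let s_1,…,s_ζ be affine functions with s_ν = s_{ν−1} on {x : g_ν(x) = 0} for ν = 2,…,ζ. Then for every subset T ⊆ {2,…,ζ} there exist affine functionals h_k (k = 1,…,n+1) with h_k(x) > 0 for all x ∈ [0,1]ⁿ, and coefficients μ_k (k = 1,…,n+1) and λ_ν (ν = 2,…,ζ), such that for every i and every x ∈ R_i, s_i(x) = Σ_{k=1}^{n+1} μ_k·max(0, h_k(x)) + Σ_{ν∈T} λ_ν·max(0, −g_ν(x)) + Σ_{ν∉T, 2≤ν≤ζ} λ_ν·max(0, g_ν(x)). That is, the spline is realized by a two-layer ReLU network with ζ+n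 hidden units in which the units of the knots in T carry the negative orientation (substituted two-sided bases). -/
open Set

/-- An affine function on `ℝⁿ`, i.e. `x ↦ ⟨a, x⟩ + c`. -/
def IsAffineFn {n : ℕ} (s : (Fin n → ℝ) → ℝ) : Prop :=
  ∃ (a : Fin n → ℝ) (c : ℝ), ∀ x, s x = (∑ i, a i * x i) + c

/-! On the ordered regions each jump `s ν - s (ν - 1)` is an affine function vanishing on the knot
`g_ν = 0`, hence equals `λ_ν g_ν`; since `g_ν ≥ 0` on `R_i` for `ν ≤ i` and `g_ν ≤ 0` for `ν > i`,
the positive units `λ_ν max(0, g_ν)` telescope to `s_i - s_1` on `R_i`. Flipping the unit at a knot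
`ν ∈ T` uses `max(0, -g) = max(0, g) - g`, so it only changes the representation by the affine
function `λ_ν g_ν`. The remaining affine part `s_1 + ∑_{ν ∈ T} λ_ν g_ν` is realized on `[0,1]ⁿ`
by the `n + 1` units `x_k + 1` and `1`, all of which are positive there. -/

namespace IsAffineFn

variable {n : ℕ} {f g : (Fin n → ℝ) → ℝ}

lemma of_sum_mul_add (a : Fin n → ℝ) (c : ℝ) : IsAffineFn fun x => (∑ t, a t * x t) + c :=
  ⟨a, c, fun _ => rfl⟩

lemma const (c : ℝ) : IsAffineFn fun _ : Fin n → ℝ => c :=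
  ⟨0, c, fun _ => by simp⟩

lemma add (hf : IsAffineFn f) (hg : IsAffineFn g) : IsAffineFn (f + g) := by
  obtain ⟨a, c, hf⟩ := hf
  obtain ⟨a', c', hg⟩ := hg
  refine ⟨a + a', c + c', fun x => ?_⟩
  simp only [Pi.add_apply, hf, hg, add_mul, Finset.sum_add_distrib]
  ring

lemma smul (r : ℝ) (hf : IsAffineFn f) : IsAffineFn (r • f) := by
  obtain ⟨a, c, hf⟩ := hf
  refine ⟨r • a, r * c, fun x => ?_⟩
  simp only [Pi.smul_apply, smul_eq_mul, hf, mul_add, Finset.mul_sum, mul_assoc]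

lemma sub (hf : IsAffineFn f) (hg : IsAffineFn g) : IsAffineFn (f - g) := by
  simpa [sub_eq_add_neg] using hf.add (hg.smul (-1))

lemma sum {ι : Type*} (S : Finset ι) {f : ι → (Fin n → ℝ) → ℝ}
    (hf : ∀ i ∈ S, IsAffineFn (f i)) : IsAffineFn (∑ i ∈ S, f i) :=
  Finset.sum_induction f IsAffineFn (fun _ _ => add) (const 0) hf

/-- Moving `x` along a coordinate axis on which `w` is nonzero onto the hyperplane changes
`f` and the functional by proportional amounts. -/
lemma exists_eq_mul_of_eq_zero (hf : IsAffineFn f) {w : Fin n → ℝ} (b : ℝ) (hw : w ≠ 0)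
    (h0 : ∀ x, (∑ t, w t * x t) + b = 0 → f x = 0) :
    ∃ l : ℝ, ∀ x, f x = l * ((∑ t, w t * x t) + b) := by
  obtain ⟨a, c, hf⟩ := hf
  obtain ⟨t₀, ht₀⟩ := Function.ne_iff.mp hw
  refine ⟨a t₀ / w t₀, fun x => ?_⟩
  set r := ((∑ t, w t * x t) + b) / w t₀
  have shift : ∀ v : Fin n → ℝ,
      ∑ t, v t * (x - Pi.single t₀ r : Fin n → ℝ) t = (∑ t, v t * x t) - v t₀ * r := fun v =>
    (dotProduct_sub v x (Pi.single t₀ r)).trans (by rw [dotProduct_single]; rfl)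
  have hproj := h0 (x - Pi.single t₀ r) (by rw [shift, mul_div_cancel₀ _ (ht₀ : w t₀ ≠ 0)]; ring)
  rw [hf, shift] at hproj
  rw [hf]
  field_simp
  linear_combination hproj

lemma exists_global_units (hf : IsAffineFn f) :
    ∃ (A : Fin (n + 1) → Fin n → ℝ) (cA mu : Fin (n + 1) → ℝ),
      (∀ k, ∀ x ∈ Icc (0 : Fin n → ℝ) 1, 0 < (∑ t, A k t * x t) + cA k) ∧
      ∀ x ∈ Icc (0 : Fin n → ℝ) 1, f x = ∑ k, mu k * max 0 ((∑ t, A k t * x t) + cA k) := by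
  obtain ⟨a, c, hf⟩ := hf
  set A : Fin (n + 1) → Fin n → ℝ := Fin.snoc (fun k => Pi.single k 1) 0
  have hA : ∀ x : Fin n → ℝ, ∀ k : Fin n, ∑ t, A k.castSucc t * x t = x k := fun x k => by
    simp only [A, Fin.snoc_castSucc]
    exact (single_dotProduct (v := x) (1 : ℝ) k).trans (one_mul _)
  have hpos : ∀ k, ∀ x ∈ Icc (0 : Fin n → ℝ) 1, 0 < (∑ t, A k t * x t) + 1 := by
    intro k x hx
    induction k using Fin.lastCases with
    | last => simp [A]
    | cast k => rw [hA]; linarith [show (0 : ℝ) ≤ x k from hx.1 k]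
  refine ⟨A, 1, Fin.snoc a (c - ∑ t, a t), hpos, fun x hx => ?_⟩
  simp only [Pi.one_apply, fun k => max_eq_right (hpos k x hx).le, Fin.sum_univ_castSucc, hA,
    Fin.snoc_castSucc, Fin.snoc_last, mul_add, Finset.sum_add_distrib]
  simp [A, hf]

end IsAffineFn

lemma Finset.sum_Icc_two_sub_pred {M : Type*} [AddCommGroup M] (f : ℕ → M) {i : ℕ}
    (hi : 1 ≤ i) : ∑ ν ∈ Finset.Icc 2 i, (f ν - f (ν - 1)) = f i - f 1 := by
  induction i, hi using Nat.le_induction with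
  | base => simp
  | succ i hi ih =>
    rw [Finset.sum_Icc_succ_top (by omega), ih, Nat.add_sub_cancel]
    abel

lemma sum_Icc_mul_max_zero_eq_sub {f lam y : ℕ → ℝ} {i ζ : ℕ} (hi : 1 ≤ i) (hiζ : i ≤ ζ)
    (hjump : ∀ ν, 2 ≤ ν → ν ≤ i → f ν - f (ν - 1) = lam ν * y ν)
    (hactive : ∀ ν, 2 ≤ ν → ν ≤ i → 0 ≤ y ν) (hinactive : ∀ ν, i < ν → ν ≤ ζ → y ν ≤ 0) :
    ∑ ν ∈ Finset.Icc 2 ζ, lam ν * max 0 (y ν) = f i - f 1 := by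
  rw [← Finset.sum_subset (Finset.Icc_subset_Icc_right hiζ) fun ν hν hν' => ?_,
    ← Finset.sum_Icc_two_sub_pred f hi]
  · refine Finset.sum_congr rfl fun ν hν => ?_
    obtain ⟨h2ν, hνi⟩ := Finset.mem_Icc.1 hν
    rw [max_eq_right (hactive ν h2ν hνi), hjump ν h2ν hνi]
  · simp only [Finset.mem_Icc, not_and, not_le] at hν hν'
    rw [max_eq_left (hinactive ν (hν' hν.1) hν.2), mul_zero]

lemma sum_mul_max_zero_neg_add_sum_sdiff {ι : Type*} [DecidableEq ι] {S T : Finset ι}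
    (hTS : T ⊆ S) (lam y : ι → ℝ) :
    ∑ ν ∈ T, lam ν * max 0 (-y ν) + ∑ ν ∈ S \ T, lam ν * max 0 (y ν) =
      ∑ ν ∈ S, lam ν * max 0 (y ν) - ∑ ν ∈ T, lam ν * y ν := by
  have hneg (ν : ι) : max 0 (-y ν) = max 0 (y ν) - y ν := by
    rw [max_comm, max_comm 0]; linarith [max_zero_sub_max_neg_zero_eq_self (y ν)]
  rw [← Finset.sum_sdiff hTS]
  simp only [hneg, mul_sub, Finset.sum_sub_distrib]
  ring

theorem spline_substituted_two_sided_bases_general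
    (n ζ : ℕ) (hζ : 1 ≤ ζ)
    (w : ℕ → Fin n → ℝ) (b : ℕ → ℝ)
    (hw : ∀ μ, 1 ≤ μ → μ ≤ ζ → w μ ≠ 0)
    (R : ℕ → Set (Fin n → ℝ))
    (hRsub : ∀ i, 1 ≤ i → i ≤ ζ → R i ⊆ Icc (0 : Fin n → ℝ) 1)
    (hzero : ∀ ν, 2 ≤ ν → ν ≤ ζ → ∀ j, 1 ≤ j → j < ν →
      ∀ x ∈ R j, (∑ t, w ν t * x t) + b ν ≤ 0)
    (hpos : ∀ i, 1 ≤ i → i ≤ ζ → ∀ μ, 1 ≤ μ → μ ≤ i →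
      ∀ x ∈ R i, 0 ≤ (∑ t, w μ t * x t) + b μ)
    (s : ℕ → (Fin n → ℝ) → ℝ)
    (hsa : ∀ i, 1 ≤ i → i ≤ ζ → IsAffineFn (s i))
    (hcont : ∀ ν, 2 ≤ ν → ν ≤ ζ → ∀ x, (∑ t, w ν t * x t) + b ν = 0 →
      s ν x = s (ν - 1) x)
    (T : Finset ℕ) (hT : ∀ ν ∈ T, 2 ≤ ν ∧ ν ≤ ζ) :
    ∃ (A : Fin (n + 1) → Fin n → ℝ) (cA mu : Fin (n + 1) → ℝ) (lam : ℕ → ℝ),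
      (∀ k, ∀ x ∈ Icc (0 : Fin n → ℝ) 1, 0 < (∑ t, A k t * x t) + cA k) ∧
      ∀ i, 1 ≤ i → i ≤ ζ → ∀ x ∈ R i,
        s i x = (∑ k, mu k * max 0 ((∑ t, A k t * x t) + cA k)) +
          (∑ ν ∈ T, lam ν * max 0 (-((∑ t, w ν t * x t) + b ν))) +
          (∑ ν ∈ Finset.Icc 2 ζ \ T, lam ν * max 0 ((∑ t, w ν t * x t) + b ν)) := by
  set g : ℕ → (Fin n → ℝ) → ℝ := fun ν x => (∑ t, w ν t * x t) + b ν
  have hjump : ∀ ν, 2 ≤ ν → ν ≤ ζ → ∃ l : ℝ, ∀ x, s ν x - s (ν - 1) x = l * g ν x := by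
    intro ν h2 hν
    have hdiff := (hsa ν (by omega) hν).sub (hsa (ν - 1) (by omega) (by omega))
    exact hdiff.exists_eq_mul_of_eq_zero (b ν) (hw ν (by omega) hν) fun x hx =>
      sub_eq_zero.2 (hcont ν h2 hν x hx)
  choose! lam hlam using hjump
  have haffine : IsAffineFn (s 1 + ∑ ν ∈ T, lam ν • g ν) :=
    (hsa 1 le_rfl hζ).add <| IsAffineFn.sum T fun ν _ => (IsAffineFn.of_sum_mul_add _ _).smul _
  obtain ⟨A, cA, mu, hA, hglobal⟩ := haffine.exists_global_units
  refine ⟨A, cA, mu, lam, hA, fun i hi hiζ x hx => ?_⟩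
  have hTS : T ⊆ Finset.Icc 2 ζ := fun ν hν => Finset.mem_Icc.2 (hT ν hν)
  rw [← hglobal x (hRsub i hi hiζ hx), add_assoc,
    sum_mul_max_zero_neg_add_sum_sdiff hTS lam (fun ν => g ν x),
    sum_Icc_mul_max_zero_eq_sub (f := fun ν => s ν x) hi hiζ
      (fun ν h2 hνi => hlam ν h2 (hνi.trans hiζ) x)
      (fun ν h2 hνi => hpos i hi hiζ ν (by omega) hνi x hx)
      (fun ν hiν hνζ => hzero ν (by omega) hνζ i hi hiν x hx)]
  simp only [Pi.add_apply, Finset.sum_apply, Pi.smul_apply, smul_eq_mul]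
  ring

/-- Substituted two-sided bases: a continuous linear spline
over ordered regions `R₁,…,R_ζ ⊆ [0,1]ⁿ` is realized by a two-layer ReLU
network with `ζ + n` hidden units in which the local units at any chosen
subset `T` of the knots carry the negative orientation, the remaining local
units the positive one, and `n + 1` global units are positive on `[0,1]ⁿ`. -/
theorem spline_substituted_two_sided_bases
    (n ζ : ℕ) (hn : 1 ≤ n) (hζ : 1 ≤ ζ)
    (w : ℕ → Fin n → ℝ) (b : ℕ → ℝ)
    (hw : ∀ μ, 1 ≤ μ → μ ≤ ζ → w μ ≠ 0)
    (R : ℕ → Set (Fin n → ℝ))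
    (hRne : ∀ i, 1 ≤ i → i ≤ ζ → (R i).Nonempty)
    (hRsub : ∀ i, 1 ≤ i → i ≤ ζ → R i ⊆ Icc (0 : Fin n → ℝ) 1)
    (hzero : ∀ ν, 2 ≤ ν → ν ≤ ζ → ∀ j, 1 ≤ j → j < ν →
      ∀ x ∈ R j, (∑ t, w ν t * x t) + b ν ≤ 0)
    (hpos : ∀ i, 1 ≤ i → i ≤ ζ → ∀ μ, 1 ≤ μ → μ ≤ i →
      ∀ x ∈ R i, 0 ≤ (∑ t, w μ t * x t) + b μ)
    (s : ℕ → (Fin n → ℝ) → ℝ)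
    (hsa : ∀ i, 1 ≤ i → i ≤ ζ → IsAffineFn (s i))
    (hcont : ∀ ν, 2 ≤ ν → ν ≤ ζ → ∀ x, (∑ t, w ν t * x t) + b ν = 0 →
      s ν x = s (ν - 1) x)
    (T : Finset ℕ) (hT : ∀ ν ∈ T, 2 ≤ ν ∧ ν ≤ ζ) :
    ∃ (A : Fin (n + 1) → Fin n → ℝ) (cA mu : Fin (n + 1) → ℝ) (lam : ℕ → ℝ),
      (∀ k, ∀ x ∈ Icc (0 : Fin n → ℝ) 1, 0 < (∑ t, A k t * x t) + cA k) ∧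
      ∀ i, 1 ≤ i → i ≤ ζ → ∀ x ∈ R i,
        s i x = (∑ k, mu k * max 0 ((∑ t, A k t * x t) + cA k)) +
          (∑ ν ∈ T, lam ν * max 0 (-((∑ t, w ν t * x t) + b ν))) +
          (∑ ν ∈ Finset.Icc 2 ζ \ T, lam ν * max 0 ((∑ t, w ν t * x t) + b ν)) :=
  spline_substituted_two_sided_bases_general n ζ hζ w b hw R hRsub hzero hpos s hsa hcont T hT
end

section
/- Let n ≥ 2 and M ≥ 2, and let f : [0,1]ⁿ → ℝ be a continuous function that is affine on every grid cell C_k = Π_{i=1}^{n} [k_i/M, (k_i+1)/M], k ∈ {0,…,M−1}ⁿ. Then there exist parameters w_i ∈ ℝⁿ, b_i, λ_i ∈ ℝ (i = 1,…,N) with N = M·n + 1 such that f(x) = Σ_{i=1}^{N} λ_i · max(0, ⟨w_i, x⟩ + b_i) for every x ∈ [0,1]ⁿ. That is, every continuous piecewise linear function on the mesh-1/M grid partition of [0,1]ⁿ, having Mⁿ linear pieces, is realized exactly on [0,1]ⁿ by a two-layer ReLU network with M·n + 1 hidden units. -/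
/-!
Two grid cells adjacent across a facet `x i = const` share every edge of that facet, in each
direction `j ≠ i`, so the affine pieces on the two cells have the same slope in direction `j`.
Hence the slope of `f` in direction `j` on a cell depends only on the `j`-th coordinate of the
cell, and `f` is additively separable: `f x = f 0 + ∑ j, g j (x j)`, where `g j` is piecewise
linear with breakpoints `m / M`. Such a univariate function is `∑ m < M, c m * max 0 (t - m / M)`
with `c m` the change of slope at `m / M`; one unit for each pair `(m, j)` and one constant unit
make `M * n + 1` units.
-/

section

open Finset

variable {ι : Type*}

section Pi

variable [DecidableEq ι]

lemma Pi.exists_lt_eq_add_single_one {k : ι → ℕ} {i : ι} (hi : 0 < k i) :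
    ∃ k' < k, k = k' + Pi.single i 1 :=
  ⟨k - Pi.single i 1, Pi.lt_def.2 ⟨fun _ => tsub_le_self, i, by simp; omega⟩,
    (tsub_add_cancel_of_le fun l => by rcases eq_or_ne l i with rfl | h <;> simp [*]; omega).symm⟩

lemma Pi.single_add_single_le_one {i j : ι} (hij : i ≠ j) :
    (Pi.single i 1 + Pi.single j 1 : ι → ℕ) ≤ 1 :=
  fun l => by by_cases hi : l = i <;> by_cases hj : l = j <;> simp_all

lemma sum_sum_range_add_single_one [Fintype ι] {R : Type*} [AddCommMonoid R]
    (g : ι → ℕ → R) (k : ι → ℕ) (i : ι) :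
    ∑ j, ∑ m ∈ range ((k + Pi.single i 1 : ι → ℕ) j), g j m =
      ∑ j, ∑ m ∈ range (k j), g j m + g i (k i) := by
  have hj : ∀ j, ∑ m ∈ range ((k + Pi.single i 1 : ι → ℕ) j), g j m =
      ∑ m ∈ range (k j), g j m + if j = i then g i (k i) else 0 := fun j => by
    rcases eq_or_ne j i with rfl | h <;> simp [sum_range_succ, *]
  rw [sum_congr rfl fun j _ => hj j]
  simp [sum_add_distrib]

end Pi

def slopeChange (s : ℕ → ℝ) : ℕ → ℝ
  | 0 => s 0
  | m + 1 => s (m + 1) - s m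

lemma sum_range_succ_slopeChange_mul (s : ℕ → ℝ) (M t : ℝ) (k : ℕ) :
    ∑ m ∈ range (k + 1), slopeChange s m * (t - m / M) =
      ∑ m ∈ range k, s m / M + s k * (t - k / M) := by
  induction k with
  | zero => simp [slopeChange]
  | succ k ih =>
    rw [sum_range_succ, ih, sum_range_succ, slopeChange]
    push_cast
    ring

lemma sum_range_slopeChange_mul_relu (s : ℕ → ℝ) {M t : ℝ} (hM : 0 < M) {N k : ℕ} (hkN : k < N)
    (hkt : k / M ≤ t) (htk : t ≤ (k + 1) / M) :
    ∑ m ∈ range N, slopeChange s m * max 0 (t - m / M) =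
      ∑ m ∈ range k, s m / M + s k * (t - k / M) := by
  rw [← sum_range_succ_slopeChange_mul, ← sum_subset (range_subset_range.2 hkN)]
  · refine sum_congr rfl fun m hm => ?_
    have hmk : (m : ℝ) ≤ k := by exact_mod_cast Nat.lt_succ_iff.1 (mem_range.1 hm)
    rw [max_eq_right (sub_nonneg.2 ((div_le_div_of_nonneg_right hmk hM.le).trans hkt))]
  · intro m _ hm
    have hkm : (k : ℝ) + 1 ≤ m := by exact_mod_cast not_lt.1 fun h => hm (mem_range.2 h)
    rw [max_eq_left (sub_nonpos.2 (htk.trans (div_le_div_of_nonneg_right hkm hM.le))), mul_zero]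

lemma exists_lt_mem_Icc_div {M : ℕ} (hM : 0 < M) {t : ℝ} (ht : t ∈ Set.Icc (0 : ℝ) 1) :
    ∃ k < M, (k : ℝ) / M ≤ t ∧ t ≤ ((k : ℝ) + 1) / M := by
  have hM' : (0 : ℝ) < M := Nat.cast_pos.2 hM
  rcases eq_or_lt_of_le ht.2 with rfl | ht1
  · refine ⟨M - 1, Nat.sub_lt hM one_pos, ?_, ?_⟩ <;>
      rw [Nat.cast_sub (Nat.one_le_iff_ne_zero.2 hM.ne'), Nat.cast_one] <;> field_simp <;> linarith
  · refine ⟨⌊M * t⌋₊, Nat.floor_lt (mul_nonneg hM'.le ht.1) |>.2 (by nlinarith), ?_, ?_⟩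
    · rw [div_le_iff₀ hM', mul_comm]
      exact Nat.floor_le (by nlinarith [ht.1])
    · rw [le_div_iff₀ hM', mul_comm]
      exact (Nat.lt_floor_add_one _).le

noncomputable def gridPoint (M : ℕ) (k : ι → ℕ) : ι → ℝ := fun i => k i / M

def gridCell (M : ℕ) (k : ι → ℕ) : Set (ι → ℝ) :=
  {x | ∀ i, (k i : ℝ) / M ≤ x i ∧ x i ≤ ((k i : ℝ) + 1) / M}

@[simp] lemma gridPoint_zero (M : ℕ) : gridPoint M (0 : ι → ℕ) = 0 := by
  ext; simp [gridPoint]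

lemma gridPoint_mem_gridCell {M : ℕ} {k q : ι → ℕ} (hkq : k ≤ q) (hqk : q ≤ k + 1) :
    gridPoint M q ∈ gridCell M k := fun i => by
  have h₁ : (k i : ℝ) ≤ q i := by exact_mod_cast hkq i
  have h₂ : (q i : ℝ) ≤ k i + 1 := by exact_mod_cast hqk i
  exact ⟨by unfold gridPoint; gcongr, by unfold gridPoint; gcongr⟩

lemma exists_gridCell_mem {M : ℕ} (hM : 0 < M) {x : ι → ℝ} (hx : x ∈ Set.Icc 0 1) :
    ∃ k : ι → ℕ, (∀ i, k i < M) ∧ x ∈ gridCell M k := by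
  choose k hkM hk using fun i => exists_lt_mem_Icc_div hM ⟨hx.1 i, hx.2 i⟩
  exact ⟨k, hkM, hk⟩

variable [Fintype ι]

def AffineOnGridCells (M : ℕ) (f : (ι → ℝ) → ℝ) : Prop :=
  ∀ k : ι → ℕ, (∀ i, k i < M) →
    ∃ (a : ι → ℝ) (c : ℝ), ∀ x ∈ gridCell M k, f x = (∑ j, a j * x j) + c

variable [DecidableEq ι]

noncomputable def gridSlope (f : (ι → ℝ) → ℝ) (M : ℕ) (j : ι) (k : ι → ℕ) : ℝ :=
  M * (f (gridPoint M (k + Pi.single j 1)) - f (gridPoint M k))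

lemma gridSlope_eq_of_mem_gridCell {f : (ι → ℝ) → ℝ} {M : ℕ} {k q : ι → ℕ} {j : ι}
    {a : ι → ℝ} {c : ℝ} (hM : M ≠ 0)
    (ha : ∀ x ∈ gridCell M k, f x = (∑ i, a i * x i) + c)
    (hkq : k ≤ q) (hqk : q + Pi.single j 1 ≤ k + 1) :
    gridSlope f M j q = a j := by
  have hq : q ≤ q + Pi.single j 1 := le_self_add
  rw [gridSlope, ha _ (gridPoint_mem_gridCell (hkq.trans hq) hqk),
    ha _ (gridPoint_mem_gridCell hkq (hq.trans hqk)), add_sub_add_right_eq_sub,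
    ← sum_sub_distrib]
  have hterm : ∀ i, a i * gridPoint M (q + Pi.single j 1) i - a i * gridPoint M q i =
      if i = j then a j / M else 0 := fun i => by
    rcases eq_or_ne i j with rfl | h <;> simp [gridPoint, *]
    ring
  simp [hterm, mul_div_cancel₀, hM]

namespace AffineOnGridCells

variable {f : (ι → ℝ) → ℝ} {M : ℕ}

lemma gridSlope_eq (hf : AffineOnGridCells M f) {k q : ι → ℕ} {j : ι}
    (hk : ∀ i, k i < M) (hkq : k ≤ q) (hqk : q + Pi.single j 1 ≤ k + 1) :
    gridSlope f M j q = gridSlope f M j k := by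
  obtain ⟨a, c, ha⟩ := hf k hk
  have hM : M ≠ 0 := Nat.ne_zero_of_lt (hk j)
  rw [gridSlope_eq_of_mem_gridCell hM ha hkq hqk, gridSlope_eq_of_mem_gridCell hM ha le_rfl
    (add_le_add_right (fun i => by by_cases h : i = j <;> simp [h]) _)]

lemma eq_add_sum_gridSlope (hf : AffineOnGridCells M f) {k : ι → ℕ} (hk : ∀ i, k i < M)
    {x : ι → ℝ} (hx : x ∈ gridCell M k) :
    f x = f (gridPoint M k) + ∑ j, gridSlope f M j k * (x j - k j / M) := by
  obtain ⟨a, c, ha⟩ := hf k hk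
  have hslope : ∀ j, gridSlope f M j k = a j := fun j =>
    gridSlope_eq_of_mem_gridCell (Nat.ne_zero_of_lt (hk j)) ha le_rfl
      (add_le_add_right (fun i => by by_cases h : i = j <;> simp [h]) _)
  simp only [hslope]
  rw [ha x hx, ha _ (gridPoint_mem_gridCell le_rfl le_self_add)]
  simp [gridPoint, mul_sub, sum_sub_distrib]
  ring

lemma gridSlope_eq_gridSlope_single (hf : AffineOnGridCells M f) (j : ι) (p : ι → ℕ)
    (hp : ∀ i, p i < M) : gridSlope f M j p = gridSlope f M j (Pi.single j (p j)) := by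
  induction p using WellFoundedLT.induction with
  | _ p ih =>
  by_cases hax : ∃ i ≠ j, 0 < p i
  · obtain ⟨i, hij, hi⟩ := hax
    obtain ⟨p', hlt, rfl⟩ := Pi.exists_lt_eq_add_single_one hi
    have hp' : ∀ l, p' l < M := fun l => (Nat.le_add_right _ _).trans_lt (hp l)
    rw [hf.gridSlope_eq hp' le_self_add, ih p' hlt hp']
    · simp [hij.symm]
    · rw [add_assoc]
      exact add_le_add_right (Pi.single_add_single_le_one hij) _
  · push Not at hax
    congr 1
    ext l
    rcases eq_or_ne l j with rfl | h
    · simp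
    · simp [h, Nat.le_zero.1 (hax l h)]

lemma apply_gridPoint_eq (hf : AffineOnGridCells M f) (k : ι → ℕ) (hk : ∀ i, k i < M) :
    f (gridPoint M k) = f 0 + ∑ j, ∑ m ∈ range (k j), gridSlope f M j (Pi.single j m) / M := by
  induction k using WellFoundedLT.induction with
  | _ k ih =>
  by_cases hk0 : k = 0
  · simp [hk0]
  obtain ⟨i, hi⟩ : ∃ i, 0 < k i := by
    by_contra! h
    exact hk0 (funext fun i => Nat.le_zero.1 (h i))
  obtain ⟨k', hlt, rfl⟩ := Pi.exists_lt_eq_add_single_one hi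
  have hk' : ∀ l, k' l < M := fun l => (Nat.le_add_right _ _).trans_lt (hk l)
  have hM : (M : ℝ) ≠ 0 := Nat.cast_ne_zero.2 (Nat.ne_zero_of_lt (hk i))
  have hstep : f (gridPoint M (k' + Pi.single i 1)) =
      f (gridPoint M k') + gridSlope f M i k' / M := by
    rw [gridSlope, mul_div_cancel_left₀ _ hM]
    ring
  rw [hstep, ih k' hlt hk', hf.gridSlope_eq_gridSlope_single i k' hk',
    sum_sum_range_add_single_one]
  ring

theorem eq_add_sum_slopeChange_mul_relu (hf : AffineOnGridCells M f) (hM : 0 < M)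
    {x : ι → ℝ} (hx : x ∈ Set.Icc 0 1) :
    f x = f 0 + ∑ j, ∑ m ∈ range M,
      slopeChange (fun m => gridSlope f M j (Pi.single j m)) m * max 0 (x j - m / M) := by
  obtain ⟨k, hk, hxk⟩ := exists_gridCell_mem hM hx
  rw [hf.eq_add_sum_gridSlope hk hxk, hf.apply_gridPoint_eq k hk, add_assoc, ← sum_add_distrib]
  congr 1
  refine sum_congr rfl fun j _ => ?_
  rw [sum_range_slopeChange_mul_relu _ (Nat.cast_pos.2 hM) (hk j) (hxk j).1 (hxk j).2,
    hf.gridSlope_eq_gridSlope_single j k hk]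

end AffineOnGridCells

theorem exists_relu_net_of_eq_add_sum_relu {n M : ℕ} {S : Set (Fin n → ℝ)} {f : (Fin n → ℝ) → ℝ}
    (c : ℝ) (lam t : Fin n → Fin M → ℝ)
    (hf : ∀ x ∈ S, f x = c + ∑ j, ∑ m, lam j m * max 0 (x j - t j m)) :
    ∃ (w : Fin (M * n + 1) → Fin n → ℝ) (b lam' : Fin (M * n + 1) → ℝ),
      ∀ x ∈ S, f x = ∑ i, lam' i * max 0 ((∑ j, w i j * x j) + b i) := by
  let e : Fin M × Fin n ≃ Fin (M * n) := finProdFinEquiv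
  refine ⟨Fin.lastCases 0 fun i => Pi.single (e.symm i).2 1,
    Fin.lastCases 1 fun i => -t (e.symm i).2 (e.symm i).1,
    Fin.lastCases c fun i => lam (e.symm i).2 (e.symm i).1, fun x hx => ?_⟩
  rw [hf x hx, Fin.sum_univ_castSucc, add_comm, ← e.sum_comp, Fintype.sum_prod_type, sum_comm]
  simp [Pi.single_apply, sub_eq_add_neg]

end

open Set

theorem grid_piecewise_linear_realized_by_relu_general
    (n M : ℕ) (hM : 2 ≤ M)
    (f : (Fin n → ℝ) → ℝ)
    (hfa : ∀ k : Fin n → ℕ, (∀ i, k i < M) →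
      ∃ (a : Fin n → ℝ) (c : ℝ), ∀ x : Fin n → ℝ,
        (∀ i, (k i : ℝ) / M ≤ x i ∧ x i ≤ ((k i : ℝ) + 1) / M) →
        f x = (∑ j, a j * x j) + c) :
    ∃ (w : Fin (M * n + 1) → Fin n → ℝ) (b lam : Fin (M * n + 1) → ℝ),
      ∀ x ∈ Icc (0 : Fin n → ℝ) 1,
        f x = ∑ i, lam i * max 0 ((∑ j, w i j * x j) + b i) := by
  have hf : AffineOnGridCells M f := hfa
  refine exists_relu_net_of_eq_add_sum_relu (f 0)
    (fun j m => slopeChange (fun m => gridSlope f M j (Pi.single j m)) m)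
    (fun _ m => (m : ℝ) / M) fun x hx => ?_
  rw [hf.eq_add_sum_slopeChange_mul_relu (by omega) hx]
  congr 1
  exact Finset.sum_congr rfl fun j _ =>
    (Fin.sum_univ_eq_sum_range (fun m => slopeChange _ m * max 0 (x j - m / M)) M).symm

/-- Every continuous piecewise linear function with respect
to the mesh-`1/M` grid partition of `[0,1]ⁿ` (having `Mⁿ` linear pieces) is
realized exactly on `[0,1]ⁿ` by a two-layer ReLU network with `M·n + 1` hidden
units. -/
theorem grid_piecewise_linear_realized_by_relu
    (n M : ℕ) (hn : 2 ≤ n) (hM : 2 ≤ M)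
    (f : (Fin n → ℝ) → ℝ) (hfc : ContinuousOn f (Icc 0 1))
    (hfa : ∀ k : Fin n → ℕ, (∀ i, k i < M) →
      ∃ (a : Fin n → ℝ) (c : ℝ), ∀ x : Fin n → ℝ,
        (∀ i, (k i : ℝ) / M ≤ x i ∧ x i ≤ ((k i : ℝ) + 1) / M) →
        f x = (∑ j, a j * x j) + c) :
    ∃ (w : Fin (M * n + 1) → Fin n → ℝ) (b lam : Fin (M * n + 1) → ℝ),
      ∀ x ∈ Icc (0 : Fin n → ℝ) 1,
        f x = ∑ i, lam i * max 0 ((∑ j, w i j * x j) + b i) :=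
  grid_piecewise_linear_realized_by_relu_general n M hM f hfa
end
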